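/- Explicit pure-quantum probability for two states: let ζ ≥ 0, let G be a 2×2 Hermitian matrix with eigenvalues λ₁ > λ₂ and a unitary matrix B = (b_{kl}) of eigenvectors so that G = B·diag(λ₁, λ₂)·B*, and let U_n = exp(i·n^{−ζ/2}·G). Then for every n ≥ 1, the coherent (p = 0) n-step probability satisfies |⟨1| U_n U_{n−1} ⋯ U_1 |1⟩|² = 1 − 2|b_{11}|²|b_{12}|²·[1 − cos((λ₁ − λ₂)·Σ_{k=1}^{n} k^{−ζ/2})], and |⟨1| U_n ⋯ U_1 |2⟩|² = 2|b_{11}|²|b_{12}|²·[1 − cos((λ₁ − λ₂)·Σ_{k=1}^{n} k^{−ζ/2})]. -/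

import Mathlib

/-
All `U_k` are exponentials of multiples of the one matrix `G`, so they commute and their product
is `exp(i S_n G) = B diag(e^{iθ₁}, e^{iθ₂}) B*` with `θⱼ = λⱼ S_n`, `S_n = Σ_{k ≤ n} k^{-ζ/2}`.
Its first row is `|b₁₁|² e^{iθ₁} + |b₁₂|² e^{iθ₂}` and, by orthogonality of the rows of `B`,
`b₁₁ conj(b₂₁) (e^{iθ₁} - e^{iθ₂})`; both squared moduli follow from
`|a e^{iθ₁} + b e^{iθ₂}|² = a² + b² + 2ab cos(θ₁ - θ₂)` and `|b₁₁|² + |b₁₂|² = |b₁₁|² + |b₂₁|² = 1`.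
-/

open Matrix BigOperators

/-- `Uprod U s t = U_t · U_{t-1} ⋯ U_{s+1}` (the identity if `t ≤ s`). -/
noncomputable def Uprod (m : ℕ) (U : ℕ → Matrix (Fin m) (Fin m) ℂ) (s : ℕ) :
    ℕ → Matrix (Fin m) (Fin m) ℂ
  | 0 => 1
  | (t + 1) => if t + 1 ≤ s then 1 else U (t + 1) * Uprod m U s t

open Complex

theorem sq_norm_ofReal_mul_exp_add_ofReal_mul_exp (a b θ₁ θ₂ : ℝ) :
    ‖(a : ℂ) * exp (θ₁ * I) + b * exp (θ₂ * I)‖ ^ 2 =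
      a ^ 2 + b ^ 2 + 2 * a * b * Real.cos (θ₁ - θ₂) := by
  rw [Complex.sq_norm, normSq_apply]
  simp only [add_re, add_im, re_ofReal_mul, im_ofReal_mul, exp_ofReal_mul_I_re,
    exp_ofReal_mul_I_im, Real.cos_sub]
  linear_combination a ^ 2 * Real.sin_sq_add_cos_sq θ₁ + b ^ 2 * Real.sin_sq_add_cos_sq θ₂

theorem Uprod_zero_eq_exp_sum_smul {m : ℕ} (A : Matrix (Fin m) (Fin m) ℂ) (c : ℕ → ℂ)
    {U : ℕ → Matrix (Fin m) (Fin m) ℂ} (hU : ∀ k, U k = NormedSpace.exp (c k • A)) (n : ℕ) :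
    Uprod m U 0 n = NormedSpace.exp ((∑ k ∈ Finset.Icc 1 n, c k) • A) := by
  induction n with
  | zero => simp [Uprod]
  | succ n ih =>
    have hcomm : Commute (c (n + 1) • A) ((∑ k ∈ Finset.Icc 1 n, c k) • A) :=
      ((Commute.refl A).smul_left _).smul_right _
    rw [Uprod, if_neg (Nat.not_succ_le_zero n), ih, hU, ← Matrix.exp_add_of_commute _ _ hcomm,
      Finset.sum_Icc_succ_top (by omega), add_smul, add_comm]

theorem mul_diagonal_mul_conjTranspose_apply {m α : Type*} [Fintype m] [DecidableEq m]
    [Semiring α] [StarRing α] (B : Matrix m m α) (d : m → α) (i j : m) :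
    (B * diagonal d * Bᴴ) i j = ∑ k, B i k * d k * star (B j k) := by
  rw [mul_apply]
  simp only [mul_diagonal, conjTranspose_apply]

section Unitary

variable {m : Type*} [Fintype m] [DecidableEq m] {B : Matrix m m ℂ}

theorem exp_smul_unitary_conj_diagonal (hB : B ∈ unitaryGroup m ℂ) (d : m → ℂ) (c : ℂ) :
    NormedSpace.exp (c • (B * diagonal d * Bᴴ)) = B * diagonal (fun k => exp (c * d k)) * Bᴴ := by
  have hinv : B⁻¹ = Bᴴ := inv_eq_left_inv (Unitary.star_mul_self_of_mem hB)
  have hconj : c • (B * diagonal d * Bᴴ) = B * diagonal (c • d) * B⁻¹ := by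
    rw [hinv, diagonal_smul, Matrix.mul_smul, Matrix.smul_mul]
  rw [hconj, exp_conj _ _ (Unitary.isUnit_coe (U := ⟨B, hB⟩)), exp_diagonal, hinv]
  congr
  funext k
  simp only [Pi.exp_def, Pi.smul_apply, smul_eq_mul, Complex.exp_eq_exp_ℂ]

theorem sum_sq_norm_row_of_mem_unitaryGroup (hB : B ∈ unitaryGroup m ℂ) (i : m) :
    ∑ j, ‖B i j‖ ^ 2 = 1 := by
  have h := congrFun (congrFun (mem_unitaryGroup_iff.mp hB) i) i
  simp only [star_eq_conjTranspose, mul_apply, conjTranspose_apply, one_apply_eq, star_def,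
    mul_conj, normSq_eq_norm_sq] at h
  exact_mod_cast h

theorem sum_sq_norm_col_of_mem_unitaryGroup (hB : B ∈ unitaryGroup m ℂ) (j : m) :
    ∑ i, ‖B i j‖ ^ 2 = 1 := by
  simpa using sum_sq_norm_row_of_mem_unitaryGroup (Unitary.star_mem hB) j

end Unitary

section TwoStates

variable {B : Matrix (Fin 2) (Fin 2) ℂ}

theorem sq_norm_unitary_conj_diagonal_exp_apply_zero_zero (hB : B ∈ unitaryGroup (Fin 2) ℂ)
    (θ₁ θ₂ : ℝ) :
    ‖(B * diagonal ![exp (θ₁ * I), exp (θ₂ * I)] * Bᴴ) 0 0‖ ^ 2 =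
      1 - 2 * ‖B 0 0‖ ^ 2 * ‖B 0 1‖ ^ 2 * (1 - Real.cos (θ₁ - θ₂)) := by
  have hrow := sum_sq_norm_row_of_mem_unitaryGroup hB 0
  rw [Fin.sum_univ_two] at hrow
  have hentry : (B * diagonal ![exp (θ₁ * I), exp (θ₂ * I)] * Bᴴ) 0 0 =
      ((‖B 0 0‖ ^ 2 : ℝ) : ℂ) * exp (θ₁ * I) + ((‖B 0 1‖ ^ 2 : ℝ) : ℂ) * exp (θ₂ * I) := by
    simp only [mul_diagonal_mul_conjTranspose_apply, Fin.sum_univ_two, star_def,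
      Matrix.cons_val_zero, Matrix.cons_val_one, ofReal_pow, ← mul_conj']
    ring
  rw [hentry, sq_norm_ofReal_mul_exp_add_ofReal_mul_exp]
  linear_combination (‖B 0 0‖ ^ 2 + ‖B 0 1‖ ^ 2 + 1) * hrow

theorem sq_norm_unitary_conj_diagonal_exp_apply_zero_one (hB : B ∈ unitaryGroup (Fin 2) ℂ)
    (θ₁ θ₂ : ℝ) :
    ‖(B * diagonal ![exp (θ₁ * I), exp (θ₂ * I)] * Bᴴ) 0 1‖ ^ 2 =
      2 * ‖B 0 0‖ ^ 2 * ‖B 0 1‖ ^ 2 * (1 - Real.cos (θ₁ - θ₂)) := by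
  have hrow := sum_sq_norm_row_of_mem_unitaryGroup hB 0
  have hcol := sum_sq_norm_col_of_mem_unitaryGroup hB 0
  rw [Fin.sum_univ_two] at hrow hcol
  have horth : B 0 0 * star (B 1 0) + B 0 1 * star (B 1 1) = 0 := by
    simpa [mul_apply, Fin.sum_univ_two] using congrFun (congrFun (mem_unitaryGroup_iff.mp hB) 0) 1
  have hentry : (B * diagonal ![exp (θ₁ * I), exp (θ₂ * I)] * Bᴴ) 0 1 =
      B 0 0 * star (B 1 0) * (((1 : ℝ) : ℂ) * exp (θ₁ * I) + ((-1 : ℝ) : ℂ) * exp (θ₂ * I)) := by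
    simp only [mul_diagonal_mul_conjTranspose_apply, Fin.sum_univ_two,
      Matrix.cons_val_zero, Matrix.cons_val_one]
    push_cast
    linear_combination exp (θ₂ * I) * horth
  rw [hentry, norm_mul, norm_mul, mul_pow, mul_pow, norm_star,
    sq_norm_ofReal_mul_exp_add_ofReal_mul_exp]
  linear_combination (2 * ‖B 0 0‖ ^ 2 * (1 - Real.cos (θ₁ - θ₂))) * (hcol - hrow)

end TwoStates

theorem stmt17_general (ζ : ℝ)
    (G : Matrix (Fin 2) (Fin 2) ℂ)
    (lam₁ lam₂ : ℝ)
    (B : Matrix (Fin 2) (Fin 2) ℂ) (hB : B ∈ Matrix.unitaryGroup (Fin 2) ℂ)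
    (hGdiag : G = B * Matrix.diagonal ![(lam₁ : ℂ), (lam₂ : ℂ)] * Bᴴ)
    (U : ℕ → Matrix (Fin 2) (Fin 2) ℂ)
    (hU : ∀ n : ℕ, U n =
      NormedSpace.exp ((Complex.I * (((n : ℝ) ^ (-(ζ / 2)) : ℝ) : ℂ)) • G))
    (n : ℕ) :
    ‖(Uprod 2 U 0 n) 0 0‖ ^ 2 =
      1 - 2 * ‖B 0 0‖ ^ 2 * ‖B 0 1‖ ^ 2 *
        (1 - Real.cos ((lam₁ - lam₂) *
          ∑ k ∈ Finset.Icc 1 n, ((k : ℝ) ^ (-(ζ / 2))))) ∧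
    ‖(Uprod 2 U 0 n) 0 1‖ ^ 2 =
      2 * ‖B 0 0‖ ^ 2 * ‖B 0 1‖ ^ 2 *
        (1 - Real.cos ((lam₁ - lam₂) *
          ∑ k ∈ Finset.Icc 1 n, ((k : ℝ) ^ (-(ζ / 2))))) := by
  set S := ∑ k ∈ Finset.Icc 1 n, ((k : ℝ) ^ (-(ζ / 2)))
  have hprod : Uprod 2 U 0 n =
      B * diagonal ![exp ((lam₁ * S : ℝ) * I), exp ((lam₂ * S : ℝ) * I)] * Bᴴ := by
    rw [Uprod_zero_eq_exp_sum_smul G _ hU, hGdiag, exp_smul_unitary_conj_diagonal hB,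
      ← Finset.mul_sum]
    congr 3
    funext k
    fin_cases k <;> (simp only [S]; push_cast; ring_nf)
  rw [hprod, sub_mul]
  exact ⟨sq_norm_unitary_conj_diagonal_exp_apply_zero_zero hB _ _,
    sq_norm_unitary_conj_diagonal_exp_apply_zero_one hB _ _⟩

/-- explicit pure-quantum probability for two states: if `G = B·diag(λ₁,λ₂)·B*`
is a 2×2 Hermitian matrix with eigenvalues `λ₁ > λ₂` and unitary eigenvector matrix `B`, and
`U_n = exp(i n^{−ζ/2} G)`, then the coherent `n`-step probabilities are
`|⟨1|U_n⋯U_1|1⟩|² = 1 − 2|b₁₁|²|b₁₂|²(1 − cos((λ₁−λ₂)·Σ_{k=1}^n k^{−ζ/2}))` and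
`|⟨1|U_n⋯U_1|2⟩|² = 2|b₁₁|²|b₁₂|²(1 − cos((λ₁−λ₂)·Σ_{k=1}^n k^{−ζ/2}))`. -/
theorem stmt17 (ζ : ℝ) (hζ : 0 ≤ ζ)
    (G : Matrix (Fin 2) (Fin 2) ℂ) (hG : G.IsHermitian)
    (lam₁ lam₂ : ℝ) (hlam : lam₂ < lam₁)
    (B : Matrix (Fin 2) (Fin 2) ℂ) (hB : B ∈ Matrix.unitaryGroup (Fin 2) ℂ)
    (hGdiag : G = B * Matrix.diagonal ![(lam₁ : ℂ), (lam₂ : ℂ)] * Bᴴ)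
    (U : ℕ → Matrix (Fin 2) (Fin 2) ℂ)
    (hU : ∀ n : ℕ, U n =
      NormedSpace.exp ((Complex.I * (((n : ℝ) ^ (-(ζ / 2)) : ℝ) : ℂ)) • G))
    (n : ℕ) (hn : 1 ≤ n) :
    ‖(Uprod 2 U 0 n) 0 0‖ ^ 2 =
      1 - 2 * ‖B 0 0‖ ^ 2 * ‖B 0 1‖ ^ 2 *
        (1 - Real.cos ((lam₁ - lam₂) *
          ∑ k ∈ Finset.Icc 1 n, ((k : ℝ) ^ (-(ζ / 2))))) ∧
    ‖(Uprod 2 U 0 n) 0 1‖ ^ 2 =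
      2 * ‖B 0 0‖ ^ 2 * ‖B 0 1‖ ^ 2 *
        (1 - Real.cos ((lam₁ - lam₂) *
          ∑ k ∈ Finset.Icc 1 n, ((k : ℝ) ^ (-(ζ / 2))))) :=
  stmt17_general ζ G lam₁ lam₂ B hB hGdiag U hU n
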